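/- Let (Ω, 𝔉, P) be a probability space with sub-σ-algebras 𝒢 ⊆ 𝒢′ ⊆ 𝔉, and let ν ∈ (0,1), γ > 1, α, β ∈ (0,1), c₁ ≥ 0, c₂ ≥ 0. Let D and A be integrable real random variables, let Δ ≥ 0 and R ≥ 0 be 𝒢-measurable random variables, and let I, J, S be events such that the indicator of I is 𝒢′-measurable. Assume: (i) almost surely D ≤ −ν·A·1(S) + (1−ν)(γ² − 1)·Δ²; (ii) E[1(Iᶜ) | 𝒢] ≤ 1 − α almost surely; (iii) E[1(Jᶜ) | 𝒢′] ≤ 1 − β almost surely; (iv) E[−A·1(S ∩ Jᶜ) | 𝒢′] ≤ c₁·Δ² + c₂·R·Δ almost surely. Then almost surely E[D·1(Iᶜ ∩ Jᶜ) | 𝒢] ≤ (1 − α)·(ν·c₂·R·Δ + [ν·c₁ + (1 − β)(1 − ν)(γ² − 1)]·Δ²). -/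

import Mathlib

open MeasureTheory


private lemma integrable_indicator'' {Ω : Type*} {m : MeasurableSpace Ω} {P : MeasureTheory.Measure Ω}
    {f : Ω → ℝ} (hf : MeasureTheory.Integrable f P) {s : Set Ω} (hs : MeasurableSet[m] s) :
    MeasureTheory.Integrable (s.indicator f) P := hf.indicator hs

theorem stmt_5 {Ω : Type*} (𝒢 𝒢' : MeasurableSpace Ω) {𝔉 : MeasurableSpace Ω} (P : Measure Ω)
    [IsProbabilityMeasure P]
    (h𝒢 : 𝒢 ≤ 𝒢') (h𝒢' : 𝒢' ≤ 𝔉)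
    (ν γ α β c₁ c₂ : ℝ)
    (hν : ν ∈ Set.Ioo (0 : ℝ) 1) (hγ : 1 < γ)
    (hα : α ∈ Set.Ioo (0 : ℝ) 1) (hβ : β ∈ Set.Ioo (0 : ℝ) 1)
    (hc₁ : 0 ≤ c₁) (hc₂ : 0 ≤ c₂)
    (D A : Ω → ℝ) (hD : Integrable D P) (hA : Integrable A P)
    (Δ R : Ω → ℝ) (hΔm : Measurable[𝒢] Δ) (hRm : Measurable[𝒢] R)
    (hΔ0 : ∀ ω, 0 ≤ Δ ω) (hR0 : ∀ ω, 0 ≤ R ω)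
    (I J S : Set Ω) (hIm : MeasurableSet I) (hJm : MeasurableSet J)
    (hSm : MeasurableSet S) (hI𝒢' : MeasurableSet[𝒢'] I)
    (hi : ∀ᵐ ω ∂P, D ω ≤
      -ν * A ω * Set.indicator S (fun _ => (1 : ℝ)) ω + (1 - ν) * (γ ^ 2 - 1) * Δ ω ^ 2)
    (hii : ∀ᵐ ω ∂P, (P[Set.indicator Iᶜ (fun _ => (1 : ℝ))|𝒢]) ω ≤ 1 - α)
    (hiii : ∀ᵐ ω ∂P, (P[Set.indicator Jᶜ (fun _ => (1 : ℝ))|𝒢']) ω ≤ 1 - β)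
    (hiv : ∀ᵐ ω ∂P, (P[Set.indicator (S ∩ Jᶜ) (fun ω => -A ω)|𝒢']) ω ≤
      c₁ * Δ ω ^ 2 + c₂ * R ω * Δ ω) :
    ∀ᵐ ω ∂P, (P[Set.indicator (Iᶜ ∩ Jᶜ) D|𝒢]) ω ≤
      (1 - α) * (ν * c₂ * R ω * Δ ω +
        (ν * c₁ + (1 - β) * (1 - ν) * (γ ^ 2 - 1)) * Δ ω ^ 2) := by
  obtain ⟨hν0, hν1⟩ := hν
  obtain ⟨hα0, hα1⟩ := hα
  obtain ⟨hβ0, hβ1⟩ := hβ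
  have hm : 𝒢 ≤ 𝔉 := h𝒢.trans h𝒢'
  set c : ℝ := (1 - ν) * (γ ^ 2 - 1) with hcdef
  have hc0 : 0 ≤ c := mul_nonneg (by linarith) (by nlinarith)
  set K : Ω → ℝ := fun ω => ν * c₂ * R ω * Δ ω + (ν * c₁ + (1 - β) * c) * Δ ω ^ 2 with hKdef
  have hq1 : 0 ≤ ν * c₁ + (1 - β) * c := by
    have := mul_nonneg hν0.le hc₁
    have := mul_nonneg (by linarith : (0:ℝ) ≤ 1 - β) hc0
    linarith
  have hK0 : ∀ ω, 0 ≤ K ω := fun ω => by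
    have h1 := mul_nonneg (mul_nonneg (mul_nonneg hν0.le hc₂) (hR0 ω)) (hΔ0 ω)
    have h2 := mul_nonneg hq1 (sq_nonneg (Δ ω))
    simp only [hKdef]
    linarith
  have hKm : Measurable[𝒢] K := by
    apply Measurable.add
    · exact ((measurable_const.mul hRm).mul hΔm)
    · exact (measurable_const.mul (hΔm.pow measurable_const))
  set f : Ω → ℝ := Set.indicator (Iᶜ ∩ Jᶜ) D with hfdef
  have hIm0 : MeasurableSet[𝔉] I := hIm
  have hJm0 : MeasurableSet[𝔉] J := hJm
  have hSm0 : MeasurableSet[𝔉] S := hSm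
  have hf : Integrable f P := integrable_indicator'' hD (hIm0.compl.inter hJm0.compl)
  set u : Ω → ℝ := Set.indicator (S ∩ Jᶜ) (fun ω => -A ω) with hudef
  have hu : Integrable u P := integrable_indicator'' hA.neg (hSm0.inter hJm0.compl)
  -- main localized claim
  have main : ∀ n : ℕ, ∀ᵐ ω ∂P, (Δ ω ≤ n ∧ R ω ≤ n) →
      (P[f|𝒢]) ω ≤ (1 - α) * K ω := by
    intro n
    set E : Set Ω := Δ ⁻¹' Set.Iic (n : ℝ) ∩ R ⁻¹' Set.Iic (n : ℝ) with hEdef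
    have hE𝒢 : MeasurableSet[𝒢] E := (hΔm measurableSet_Iic).inter (hRm measurableSet_Iic)
    have hEI' : MeasurableSet[𝒢'] (E ∩ Iᶜ) := (h𝒢 _ hE𝒢).inter hI𝒢'.compl
    -- the pieces
    set t1 : Ω → ℝ := Set.indicator (E ∩ Iᶜ) u with ht1def
    have ht1 : Integrable t1 P := integrable_indicator'' hu (h𝒢' _ hEI')
    set q : Ω → ℝ := fun ω => c * Set.indicator E (fun ω => Δ ω ^ 2) ω
        * Set.indicator Iᶜ (fun _ => (1 : ℝ)) ω with hqdef
    have hq0 : ∀ ω, 0 ≤ q ω := fun ω => by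
      apply mul_nonneg (mul_nonneg hc0 _) _
      · exact Set.indicator_nonneg (fun x _ => sq_nonneg _) ω
      · exact Set.indicator_nonneg (fun x _ => zero_le_one) ω
    have hcn0 : 0 ≤ c * (n : ℝ) ^ 2 := mul_nonneg hc0 (sq_nonneg _)
    have hqle : ∀ ω, q ω ≤ c * (n : ℝ) ^ 2 := fun ω => by
      simp only [hqdef]
      by_cases hE : ω ∈ E
      · have hΔn : Δ ω ≤ (n : ℝ) := hE.1
        have h1 : Δ ω ^ 2 ≤ (n : ℝ) ^ 2 := by nlinarith [hΔ0 ω]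
        by_cases hI : ω ∈ Iᶜ
        · rw [Set.indicator_of_mem hE, Set.indicator_of_mem hI]
          have := mul_le_mul_of_nonneg_left h1 hc0
          nlinarith
        · rw [Set.indicator_of_notMem hI, mul_zero]; exact hcn0
      · rw [Set.indicator_of_notMem hE, mul_zero, zero_mul]; exact hcn0
    have hqm' : Measurable[𝒢'] q := by
      apply Measurable.mul
      · exact measurable_const.mul
          (((hΔm.pow measurable_const).indicator hE𝒢).mono h𝒢 le_rfl)
      · exact measurable_const.indicator hI𝒢'.compl
    set oneJ : Ω → ℝ := Set.indicator Jᶜ (fun _ => (1 : ℝ)) with hoJdef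
    have hoJ : Integrable oneJ P := integrable_indicator'' (integrable_const (1 : ℝ)) hJm0.compl
    set t2 : Ω → ℝ := fun ω => q ω * oneJ ω with ht2def
    have ht2 : Integrable t2 P :=
      hoJ.bdd_mul (hqm'.mono h𝒢' le_rfl).aestronglyMeasurable
        (c := c * (n : ℝ) ^ 2) (ae_of_all _ fun ω => by rw [Real.norm_eq_abs, abs_of_nonneg (hq0 ω)]; exact hqle ω)
    set gn : Ω → ℝ := fun ω => ν * t1 ω + t2 ω with hgndef
    have hgn : Integrable gn P := ((ht1.const_mul ν).add ht2)
    set fn : Ω → ℝ := Set.indicator E f with hfndef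
    have hfn : Integrable fn P := integrable_indicator'' hf (hm _ hE𝒢)
    -- pointwise comparison fn ≤ gn
    have hle : fn ≤ᵐ[P] gn := by
      filter_upwards [hi] with ω hω
      by_cases hE : ω ∈ E
      · by_cases hIc : ω ∈ Iᶜ
        · by_cases hJc : ω ∈ Jᶜ
          · have hmem : ω ∈ Iᶜ ∩ Jᶜ := ⟨hIc, hJc⟩
            have h1 : fn ω = D ω := by
              simp only [hfndef, hfdef]
              rw [Set.indicator_of_mem hE, Set.indicator_of_mem hmem]
            have h2 : gn ω = ν * u ω + c * Δ ω ^ 2 := by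
              simp only [hgndef, ht1def, ht2def, hqdef, hoJdef]
              rw [Set.indicator_of_mem (Set.mem_inter hE hIc),
                Set.indicator_of_mem hE, Set.indicator_of_mem hIc, Set.indicator_of_mem hJc]
              ring
            have h3 : ν * u ω = -ν * A ω * Set.indicator S (fun _ => (1 : ℝ)) ω := by
              simp only [hudef]
              by_cases hS : ω ∈ S
              · rw [Set.indicator_of_mem (Set.mem_inter hS hJc), Set.indicator_of_mem hS]; ring
              · rw [Set.indicator_of_notMem (fun h => hS h.1), Set.indicator_of_notMem hS]
                ring
            rw [h1, h2, h3]
            exact hω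
          · have h1 : fn ω = 0 := by
              simp only [hfndef, hfdef]
              rw [Set.indicator_of_mem hE,
                Set.indicator_of_notMem (fun h => hJc h.2)]
            have h2 : gn ω = 0 := by
              simp only [hgndef, ht1def, ht2def, hudef, hoJdef]
              rw [Set.indicator_of_mem (Set.mem_inter hE hIc),
                Set.indicator_of_notMem (fun h => hJc h.2),
                Set.indicator_of_notMem hJc]
              ring
            rw [h1, h2]
        · have h1 : fn ω = 0 := by
            simp only [hfndef, hfdef]
            rw [Set.indicator_of_mem hE,
              Set.indicator_of_notMem (fun h => hIc h.1)]
          have h2 : gn ω = 0 := by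
            simp only [hgndef, ht1def, ht2def, hqdef]
            rw [Set.indicator_of_notMem (fun h => hIc h.2),
              Set.indicator_of_notMem hIc]
            ring
          rw [h1, h2]
      · have h1 : fn ω = 0 := by
          simp only [hfndef]; rw [Set.indicator_of_notMem hE]
        have h2 : gn ω = 0 := by
          simp only [hgndef, ht1def, ht2def, hqdef]
          rw [Set.indicator_of_notMem (fun h => hE h.1),
            Set.indicator_of_notMem hE]
          ring
        rw [h1, h2]
    -- conditional expectation of gn given 𝒢'
    have hcond_t1 : P[t1|𝒢'] =ᵐ[P] Set.indicator (E ∩ Iᶜ) (P[u|𝒢']) :=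
      condExp_indicator hu hEI'
    have hcond_t2 : P[t2|𝒢'] =ᵐ[P] fun ω => q ω * (P[oneJ|𝒢']) ω := by
      have := condExp_mul_of_stronglyMeasurable_left (μ := P) hqm'.stronglyMeasurable ht2 hoJ
      exact this
    have hcond_gn : P[gn|𝒢'] =ᵐ[P]
        fun ω => ν * Set.indicator (E ∩ Iᶜ) (P[u|𝒢']) ω + q ω * (P[oneJ|𝒢']) ω := by
      have hadd : P[gn|𝒢'] =ᵐ[P] P[fun ω => ν * t1 ω|𝒢'] + P[t2|𝒢'] :=
        condExp_add (ht1.const_mul ν) ht2 _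
      have hsmul : P[fun ω => ν * t1 ω|𝒢'] =ᵐ[P] fun ω => ν * (P[t1|𝒢']) ω := by
        exact condExp_smul (μ := P) (m := 𝒢') ν t1
      filter_upwards [hadd, hsmul, hcond_t1, hcond_t2] with ω h1 h2 h3 h4
      rw [h1]
      simp only [Pi.add_apply]
      rw [h2, h3, h4]
    -- bound: P[gn|𝒢'] ≤ hbound
    set hb : Ω → ℝ := fun ω => Set.indicator E K ω * Set.indicator Iᶜ (fun _ => (1 : ℝ)) ω
      with hhbdef
    have hbound : P[gn|𝒢'] ≤ᵐ[P] hb := by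
      filter_upwards [hcond_gn, hiii, hiv] with ω h1 h3 h4
      rw [h1]
      by_cases hIc : ω ∈ Iᶜ
      · by_cases hE : ω ∈ E
        · have e1 : ν * Set.indicator (E ∩ Iᶜ) (P[u|𝒢']) ω ≤
              ν * (c₁ * Δ ω ^ 2 + c₂ * R ω * Δ ω) := by
            rw [Set.indicator_of_mem (Set.mem_inter hE hIc)]
            exact mul_le_mul_of_nonneg_left h4 hν0.le
          have e2 : q ω * (P[oneJ|𝒢']) ω ≤ q ω * (1 - β) :=
            mul_le_mul_of_nonneg_left h3 (hq0 ω)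
          have e3 : q ω = c * Δ ω ^ 2 := by
            simp only [hqdef]
            rw [Set.indicator_of_mem hE, Set.indicator_of_mem hIc]; ring
          simp only [hhbdef, hKdef]
          rw [Set.indicator_of_mem hE, Set.indicator_of_mem hIc]
          calc ν * Set.indicator (E ∩ Iᶜ) (P[u|𝒢']) ω + q ω * (P[oneJ|𝒢']) ω
              ≤ ν * (c₁ * Δ ω ^ 2 + c₂ * R ω * Δ ω) + q ω * (1 - β) := add_le_add e1 e2
            _ = (ν * c₂ * R ω * Δ ω + (ν * c₁ + (1 - β) * c) * Δ ω ^ 2) * 1 := by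
                rw [e3]; ring
        · have e1 : Set.indicator (E ∩ Iᶜ) (P[u|𝒢']) ω = 0 :=
            Set.indicator_of_notMem (fun h => hE h.1) _
          have e2 : q ω = 0 := by
            simp only [hqdef]; rw [Set.indicator_of_notMem hE]; ring
          simp only [hhbdef]
          rw [Set.indicator_of_notMem hE, e1, e2]
          simp
      · have e1 : Set.indicator (E ∩ Iᶜ) (P[u|𝒢']) ω = 0 :=
          Set.indicator_of_notMem (fun h => hIc h.2) _
        have e2 : q ω = 0 := by
          simp only [hqdef]; rw [Set.indicator_of_notMem hIc]; ring
        simp only [hhbdef]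
        rw [Set.indicator_of_notMem hIc, e1, e2]
        simp
    have hKbd : ∀ ω, ‖Set.indicator E K ω‖ ≤
        ν * c₂ * (n : ℝ) * (n : ℝ) + (ν * c₁ + (1 - β) * c) * (n : ℝ) ^ 2 := fun ω => by
      have hCnn : (0 : ℝ) ≤ ν * c₂ * (n : ℝ) * (n : ℝ) + (ν * c₁ + (1 - β) * c) * (n : ℝ) ^ 2 := by
        have h1 : (0:ℝ) ≤ ν * c₂ * (n : ℝ) * (n : ℝ) := by
          have := mul_nonneg hν0.le hc₂; positivity
        have h2 := mul_nonneg hq1 (sq_nonneg ((n : ℝ)))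
        linarith
      by_cases hE : ω ∈ E
      · rw [Set.indicator_of_mem hE, Real.norm_eq_abs, abs_of_nonneg (hK0 ω)]
        simp only [hKdef]
        have h1 : Δ ω ≤ n := hE.1
        have h2 : R ω ≤ n := hE.2
        have := hΔ0 ω; have := hR0 ω
        have hΔsq : Δ ω ^ 2 ≤ (n : ℝ) ^ 2 := by nlinarith
        have hRΔ : R ω * Δ ω ≤ (n : ℝ) * (n : ℝ) := by nlinarith
        have hνc₂ : (0:ℝ) ≤ ν * c₂ := mul_nonneg hν0.le hc₂
        have e1 : ν * c₂ * R ω * Δ ω ≤ ν * c₂ * (n : ℝ) * (n : ℝ) := by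
          have h := mul_le_mul_of_nonneg_left hRΔ hνc₂
          nlinarith
        have e2 : (ν * c₁ + (1 - β) * c) * Δ ω ^ 2 ≤ (ν * c₁ + (1 - β) * c) * (n : ℝ) ^ 2 :=
          mul_le_mul_of_nonneg_left hΔsq hq1
        linarith
      · rw [Set.indicator_of_notMem hE, norm_zero]; exact hCnn
    have hKE𝒢 : Measurable[𝒢] (Set.indicator E K) := hKm.indicator hE𝒢
    have hhb : Integrable hb P := by
      refine Integrable.bdd_mul ?_ ((hKE𝒢.mono hm le_rfl).aestronglyMeasurable) (ae_of_all _ hKbd)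
      exact integrable_indicator'' (integrable_const (1 : ℝ)) hIm0.compl
    -- put it together
    have step1 : P[fn|𝒢'] ≤ᵐ[P] hb := (condExp_mono hfn hgn hle).trans hbound
    have step2 : P[fn|𝒢] ≤ᵐ[P] P[hb|𝒢] := by
      have tower : P[P[fn|𝒢']|𝒢] =ᵐ[P] P[fn|𝒢] := condExp_condExp_of_le h𝒢 h𝒢'
      exact tower.symm.le.trans (condExp_mono integrable_condExp hhb step1)
    have hcond_hb : P[hb|𝒢] =ᵐ[P]
        fun ω => Set.indicator E K ω * (P[Set.indicator Iᶜ (fun _ => (1 : ℝ))|𝒢]) ω :=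
      condExp_mul_of_stronglyMeasurable_left hKE𝒢.stronglyMeasurable hhb
        (integrable_indicator'' (integrable_const (1 : ℝ)) hIm0.compl)
    have step3 : P[fn|𝒢] ≤ᵐ[P] fun ω => Set.indicator E K ω * (1 - α) := by
      filter_upwards [step2, hcond_hb, hii] with ω h1 h2 h3
      refine h1.trans ?_
      rw [h2]
      refine mul_le_mul_of_nonneg_left h3 ?_
      exact Set.indicator_nonneg (fun x _ => hK0 x) ω
    have hcond_fn : P[fn|𝒢] =ᵐ[P] Set.indicator E (P[f|𝒢]) := condExp_indicator hf hE𝒢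
    filter_upwards [step3, hcond_fn] with ω h1 h2 hmem
    have hE : ω ∈ E := Set.mem_inter hmem.1 hmem.2
    have h3 := h1
    rw [h2, Set.indicator_of_mem hE] at h3
    rw [Set.indicator_of_mem hE] at h3
    calc (P[f|𝒢]) ω ≤ K ω * (1 - α) := h3
      _ = (1 - α) * K ω := by ring
  rw [← ae_all_iff] at main
  filter_upwards [main] with ω hω
  set n : ℕ := ⌈max (Δ ω) (R ω)⌉₊ with hn
  have h1 : Δ ω ≤ n := (le_max_left _ _).trans (Nat.le_ceil _)
  have h2 : R ω ≤ n := (le_max_right _ _).trans (Nat.le_ceil _)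
  have h := hω n ⟨h1, h2⟩
  have heq : (1 - α) * K ω = (1 - α) * (ν * c₂ * R ω * Δ ω +
      (ν * c₁ + (1 - β) * (1 - ν) * (γ ^ 2 - 1)) * Δ ω ^ 2) := by
    simp only [hKdef, hcdef]; ring
  exact le_of_le_of_eq h heq
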